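/- Let N = 4L+1 and define u_n(k) = S(3L+n+k)S(3L+n-k) and v_n(k) = sin(2πk/N) u_n(k). Then for -L < n ≤ L and -2L < k < 2L: u_n(k+1) - u_n(k-1) = -4 sin(π(2L+2n)/N) v_{n-1}(k). -/

import Mathlib

/-
Write `a = 3L+n+k-1` and `c = 3L+n-k-1`, both nonnegative in the given range. Peeling two
factors off `S(a+2)` and `S(c+2)` gives
`u_n(k+1) - u_n(k-1) = 4 S(a) S(c) (sin A sin(A+t) - sin B sin(B+t))` with
`A = π(a+1)/N`, `B = π(c+1)/N`, `t = π/N`, and the product-to-sum identity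
`sin A sin(A+t) - sin B sin(B+t) = sin(A+B+t) sin(A-B)` turns the bracket into
`sin(π + π(2L+2n)/N) sin(2πk/N) = -sin(π(2L+2n)/N) sin(2πk/N)`.
-/

open scoped Real BigOperators

/-- `S N k = ∏_{j=1}^{k} 2 sin(π j / N)`, with `S N 0 = 1` (empty product);
note `S N k = 0` for `k ≥ N`. -/
noncomputable def S (N : ℕ) (k : ℕ) : ℝ :=
  ∏ j ∈ Finset.Icc 1 k, 2 * Real.sin (Real.pi * j / N)

/-- The index set `I_N = {-M+1, ..., -M+N}` with `M = ⌊(N+1)/2⌋`.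
For `N = 4L+1` this is `{-2L, ..., 2L}`. -/
noncomputable def Iset (N : ℕ) : Finset ℤ :=
  Finset.Icc (1 - (((N + 1) / 2 : ℕ) : ℤ)) ((N : ℤ) - (((N + 1) / 2 : ℕ) : ℤ))

/-- The centered discrete Fourier transform. -/
noncomputable def dft (N : ℕ) (u : ℤ → ℂ) (l : ℤ) : ℂ :=
  (Real.sqrt N : ℂ)⁻¹ *
    ∑ k ∈ Iset N, Complex.exp (-2 * Real.pi * Complex.I * k * l / N) * u k

/-- The even vectors `u_n(k) = S(3L+n+k) S(3L+n-k)` (for `N = 4L+1`). -/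
noncomputable def uvec (L : ℕ) (n k : ℤ) : ℝ :=
  S (4 * L + 1) (3 * L + n + k).toNat * S (4 * L + 1) (3 * L + n - k).toNat

/-- The odd vectors `v_n(k) = sin(2πk/N) S(3L+n+k) S(3L+n-k)` (for `N = 4L+1`). -/
noncomputable def vvec (L : ℕ) (n k : ℤ) : ℝ :=
  Real.sin (2 * Real.pi * k / (4 * L + 1)) * uvec L n k

open Real

theorem sin_mul_sin_add_sub_sin_mul_sin_add (A B t : ℝ) :
    sin A * sin (A + t) - sin B * sin (B + t) = sin (A + B + t) * sin (A - B) := by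
  have hA := sin_sq_add_cos_sq A
  have hB := sin_sq_add_cos_sq B
  rw [sin_add, sin_add, show A + B + t = (A + B) + t by ring, sin_add, sin_add, cos_add, sin_sub]
  linear_combination cos t * (sin B ^ 2 * hA - sin A ^ 2 * hB) +
    sin t * (sin B * cos B * hA - sin A * cos A * hB)

theorem S_succ (N m : ℕ) : S N (m + 1) = S N m * (2 * sin (π * (m + 1) / N)) := by
  rw [S, Finset.prod_Icc_succ_top (by omega : 1 ≤ m + 1), ← S]
  push_cast
  ring

theorem S_add_two (N m : ℕ) :
    S N (m + 2) = 4 * sin (π * (m + 1) / N) * sin (π * (m + 1) / N + π / N) * S N m := by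
  rw [S_succ, S_succ]
  push_cast
  ring_nf

theorem S_add_two_mul_sub_mul_S_add_two (N a c : ℕ) :
    S N (a + 2) * S N c - S N a * S N (c + 2) =
      4 * sin (π * (a + c + 3) / N) * sin (π * ((a : ℝ) - c) / N) * (S N a * S N c) := by
  have key := sin_mul_sin_add_sub_sin_mul_sin_add (π * (a + 1) / N) (π * (c + 1) / N) (π / N)
  rw [S_add_two, S_add_two]
  rw [show π * (a + 1) / N + π * (c + 1) / N + π / N = π * (a + c + 3) / N by ring,
    show π * (a + 1) / N - π * (c + 1) / N = π * ((a : ℝ) - c) / N by ring] at key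
  linear_combination 4 * (S N a * S N c) * key

theorem stmt12_general (L : ℕ) (n : ℤ) (hn1 : -(L : ℤ) < n)
    (k : ℤ) (hk1 : -(2 * (L : ℤ)) < k) (hk2 : k < 2 * L) :
    uvec L n (k + 1) - uvec L n (k - 1) =
      -4 * Real.sin (Real.pi * (2 * L + 2 * n) / (4 * L + 1)) * vvec L (n - 1) k := by
  obtain ⟨a, ha⟩ : ∃ a : ℕ, (a : ℤ) = 3 * L + n + k - 1 :=
    ⟨_, Int.toNat_of_nonneg (by omega)⟩
  obtain ⟨c, hc⟩ : ∃ c : ℕ, (c : ℤ) = 3 * L + n - k - 1 :=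
    ⟨_, Int.toNat_of_nonneg (by omega)⟩
  have hu_succ : uvec L n (k + 1) = S (4 * L + 1) (a + 2) * S (4 * L + 1) c := by
    rw [uvec]; congr 2 <;> omega
  have hu_pred : uvec L n (k - 1) = S (4 * L + 1) a * S (4 * L + 1) (c + 2) := by
    rw [uvec]; congr 2 <;> omega
  have hv : vvec L (n - 1) k =
      sin (2 * π * k / (4 * L + 1)) * (S (4 * L + 1) a * S (4 * L + 1) c) := by
    rw [vvec, uvec]; congr 3 <;> omega
  have haR : (a : ℝ) = 3 * L + n + k - 1 := by exact_mod_cast ha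
  have hcR : (c : ℝ) = 3 * L + n - k - 1 := by exact_mod_cast hc
  have hN : (4 * (L : ℝ) + 1) ≠ 0 := by positivity
  have hsum : sin (π * (a + c + 3) / ((4 * L + 1 : ℕ) : ℝ)) =
      -sin (π * (2 * L + 2 * n) / (4 * L + 1)) := by
    rw [← sin_add_pi]
    congr 1
    push_cast
    rw [haR, hcR]
    field_simp
    ring
  have hdiff : π * ((a : ℝ) - c) / ((4 * L + 1 : ℕ) : ℝ) = 2 * π * k / (4 * L + 1) := by
    push_cast
    rw [haR, hcR]
    ring
  rw [hu_succ, hu_pred, hv, S_add_two_mul_sub_mul_S_add_two, hsum, hdiff]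
  ring

theorem stmt12 (L : ℕ) (hL : 1 ≤ L) (n : ℤ) (hn1 : -(L : ℤ) < n) (hn2 : n ≤ L)
    (k : ℤ) (hk1 : -(2 * (L : ℤ)) < k) (hk2 : k < 2 * L) :
    uvec L n (k + 1) - uvec L n (k - 1) =
      -4 * Real.sin (Real.pi * (2 * L + 2 * n) / (4 * L + 1)) * vvec L (n - 1) k :=
  stmt12_general L n hn1 k hk1 hk2
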